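/- There exists a unique Witt vector c ∈ 𝕎(R) such that for every n ≥ 0 the n-th ghost component of c equals ε·q^{p^n−1}·[p^n]_{q^{p^α}}. (This is the ghost-component description of the element c of Proposition 3.4, which satisfies g̃(q) − f̃(q) = f̃([p]_{q^{p^α}})·c for the δ-ring lifts g̃, f̃ of ψ and the inclusion A → R.) -/

import Mathlib

/-!
The witness is `c = [q + ε] - [q]`, a difference of Teichmüller lifts: the `n`-th ghost component
of `[r]` is `r ^ p ^ n`, and since `ε ^ 2 = q (q ^ p ^ α - 1) ε`, multiplication by `ε` identifies
`q + ε` with `q ^ (p ^ α + 1)`, so the geometric sum for `(q + ε) ^ m - q ^ m` collapses to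
`ε q ^ (m - 1) [m]_{q ^ p ^ α}`.

Uniqueness holds because the ghost map of `𝕎(R)` is injective: `R` embeds into `K × K`,
`K = Frac A`, by `ε ↦ 0` and `ε ↦ q (q ^ p ^ α - 1)` (the latter is nonzero, `A` being a domain),
and the ghost map is bijective over `K × K`, where `p` is invertible.
-/

open Finset

/-- The q-analogue `[n]_t = ∑_{i=0}^{n-1} t^i`. -/
def qan {A : Type*} [CommRing A] (t : A) (n : ℕ) : A := ∑ i ∈ Finset.range n, t ^ i

/-- `A := W(k)⟦q−1⟧`, the power series ring over the `p`-typical Witt vectors of `k`;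
`q` denotes `1` plus the power series variable. -/
noncomputable def qq (p : ℕ) [Fact p.Prime] (k : Type*) [CommRing k] :
    PowerSeries (WittVector p k) :=
  1 + PowerSeries.X

/-- The distinguished element `d := [p]_{q^{p^α}}` of `A`. -/
noncomputable def dd (p α : ℕ) [Fact p.Prime] (k : Type*) [CommRing k] :
    PowerSeries (WittVector p k) :=
  qan ((qq p k) ^ p ^ α) p

/-- The polynomial `ε² − q·(q^{p^α}−1)·ε` over `A`, whose adjunction defines `R`. -/
noncomputable def relPoly (p α : ℕ) [Fact p.Prime] (k : Type*) [CommRing k] :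
    Polynomial (PowerSeries (WittVector p k)) :=
  Polynomial.X ^ 2 - Polynomial.C (qq p k * ((qq p k) ^ p ^ α - 1)) * Polynomial.X

/-- `R := A[ε]/(ε² − q·(q^{p^α}−1)·ε)`, a free `A`-module with basis `1, ε`. -/
noncomputable abbrev Rring (p α : ℕ) [Fact p.Prime] (k : Type*) [CommRing k] :=
  AdjoinRoot (relPoly p α k)

/-- `ε ∈ R`. -/
noncomputable def eps (p α : ℕ) [Fact p.Prime] (k : Type*) [CommRing k] : Rring p α k :=
  AdjoinRoot.root (relPoly p α k)

open Polynomial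

namespace WittVector

variable {p : ℕ} [Fact p.Prime] {R S : Type*} [CommRing R] [CommRing S]

theorem ghostComponent_map (f : R →+* S) (x : WittVector p R) (n : ℕ) :
    ghostComponent n (map f x) = f (ghostComponent n x) := by
  simp only [ghostComponent_apply, MvPolynomial.aeval_def]
  rw [MvPolynomial.eval₂_comp_left f (algebraMap ℤ R) x.coeff]
  congr 1
  ext m
  simp

theorem ghostMap_injective_of_injective (f : R →+* S) (hf : Function.Injective f)
    (hp : IsUnit (p : S)) : Function.Injective (ghostMap : WittVector p R → ℕ → R) := by
  intro x y h
  have := hp.invertible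
  apply map_injective f hf
  apply (ghostMap.bijective_of_invertible p S).injective
  funext n
  rw [ghostMap_apply, ghostMap_apply, ghostComponent_map, ghostComponent_map, ← ghostMap_apply,
    ← ghostMap_apply, h]

end WittVector

section TwoRoots

variable {A B : Type*} [CommRing A] [CommRing B]

theorem eval₂_X_sq_sub_C_mul_X (φ : A →+* B) (c : A) (r : B) :
    (X ^ 2 - C c * X).eval₂ φ r = r * (r - φ c) := by
  simp only [eval₂_sub, eval₂_mul, eval₂_pow, eval₂_X, eval₂_C]
  ring

theorem AdjoinRoot.root_sq_of_X_sq_sub_C_mul_X (c : A) :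
    root (X ^ 2 - C c * X) ^ 2 = of (X ^ 2 - C c * X) c * root (X ^ 2 - C c * X) := by
  have h := eval₂_root (X ^ 2 - C c * X)
  rw [eval₂_X_sq_sub_C_mul_X] at h
  linear_combination h

noncomputable def AdjoinRoot.evalRoots (φ : A →+* B) (c : A) :
    AdjoinRoot (X ^ 2 - C c * X) →+* B × B :=
  (lift φ 0 (by rw [eval₂_X_sq_sub_C_mul_X, zero_mul])).prod
    (lift φ (φ c) (by rw [eval₂_X_sq_sub_C_mul_X, sub_self, mul_zero]))

theorem AdjoinRoot.evalRoots_mk (φ : A →+* B) (c : A) (g : A[X]) :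
    evalRoots φ c (mk _ g) = (φ (g.eval 0), φ (g.eval c)) := by
  simp [evalRoots, coeff_zero_eq_eval_zero]

theorem AdjoinRoot.evalRoots_injective [IsDomain A] {φ : A →+* B} (hφ : Function.Injective φ)
    {c : A} (hc : c ≠ 0) : Function.Injective (evalRoots φ c) := by
  refine (injective_iff_map_eq_zero _).2 fun z hz => ?_
  obtain ⟨g, rfl⟩ := mk_surjective z
  rw [evalRoots_mk, Prod.mk_eq_zero, map_eq_zero_iff φ hφ, map_eq_zero_iff φ hφ] at hz
  obtain ⟨h0, hc0⟩ := hz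
  obtain ⟨g, rfl⟩ := X_dvd_iff.2 (by simpa [coeff_zero_eq_eval_zero] using h0)
  rw [eval_mul, eval_X, mul_eq_zero, or_iff_right hc] at hc0
  obtain ⟨g, rfl⟩ := dvd_iff_isRoot.2 hc0
  exact mk_eq_zero.2 ⟨g, by ring⟩

end TwoRoots

theorem add_pow_sub_pow_of_sq_eq_mul {R : Type*} [CommRing R] {x ε a : R} (h : ε ^ 2 = a * ε)
    (m : ℕ) : (x + ε) ^ m - x ^ m = ε * ∑ i ∈ range m, (x + a) ^ i * x ^ (m - 1 - i) := by
  have hε : ∀ i : ℕ, ε * (x + ε) ^ i = ε * (x + a) ^ i := by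
    intro i
    induction i with
    | zero => simp
    | succ i ih => linear_combination (x + ε) * ih + (x + a) ^ i * h
  rw [← geom_sum₂_mul, add_sub_cancel_left, mul_comm, mul_sum, mul_sum]
  refine sum_congr rfl fun i _ => ?_
  rw [← mul_assoc, hε, mul_assoc]

theorem map_qan {R S : Type*} [CommRing R] [CommRing S] (f : R →+* S) (t : R) (n : ℕ) :
    f (qan t n) = qan (f t) n := by
  simp only [qan, map_sum, map_pow]

theorem add_pow_sub_pow_eq_mul_qan {R : Type*} [CommRing R] {x y ε : R}
    (h : ε ^ 2 = x * (y - 1) * ε) (m : ℕ) :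
    (x + ε) ^ m - x ^ m = ε * (x ^ (m - 1) * qan y m) := by
  rw [add_pow_sub_pow_of_sq_eq_mul h, qan, mul_sum _ _ (x ^ (m - 1))]
  refine congrArg (ε * ·) (sum_congr rfl fun i hi => ?_)
  rw [show x + x * (y - 1) = x * y by ring, mul_pow, mul_right_comm, ← pow_add,
    Nat.add_sub_of_le (by grind)]

section

variable (p α : ℕ) [Fact p.Prime] (k : Type*) [Field k] [CharP k p]

theorem qq_mul_qq_pow_sub_one_ne_zero : qq p k * (qq p k ^ p ^ α - 1) ≠ 0 := by
  have hq : qq p k ≠ 0 := fun h => by simpa [qq] using congrArg PowerSeries.constantCoeff h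
  have hqan : qan (qq p k) (p ^ α) ≠ 0 := fun h => by
    apply pow_ne_zero α (WittVector.p_nonzero p k)
    simpa [qan, qq] using congrArg PowerSeries.constantCoeff h
  -- `q ^ N - 1 = [N]_q * (q - 1)`, and `[N]_q` has constant coefficient `N`
  rw [← geom_sum_mul, ← qan, qq, add_sub_cancel_left]
  exact mul_ne_zero hq (mul_ne_zero hqan PowerSeries.X_ne_zero)

theorem ghostMap_injective_Rring :
    Function.Injective (WittVector.ghostMap : WittVector p (Rring p α k) → ℕ → Rring p α k) := by
  let A := PowerSeries (WittVector p k)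
  let K := FractionRing A
  have hp : IsUnit (p : K) := by
    rw [isUnit_iff_ne_zero, ← map_natCast (algebraMap A K)]
    refine (map_ne_zero_iff _ (IsFractionRing.injective A K)).2 fun h => ?_
    apply WittVector.p_nonzero p k
    simpa using congrArg PowerSeries.constantCoeff h
  refine WittVector.ghostMap_injective_of_injective _
    (AdjoinRoot.evalRoots_injective (IsFractionRing.injective A K)
      (qq_mul_qq_pow_sub_one_ne_zero p α k)) ?_
  simpa [Prod.isUnit_iff] using hp

end

theorem stmt5_general (p : ℕ) [Fact p.Prime] (α : ℕ)
    (k : Type*) [Field k] [CharP k p] :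
    ∃! c : WittVector p (Rring p α k), ∀ n : ℕ,
      WittVector.ghostComponent n c =
        eps p α k *
          algebraMap _ _ ((qq p k) ^ (p ^ n - 1) * qan ((qq p k) ^ p ^ α) (p ^ n)) := by
  set E := algebraMap (PowerSeries (WittVector p k)) (Rring p α k)
  have hε : eps p α k ^ 2 = E (qq p k) * (E (qq p k ^ p ^ α) - 1) * eps p α k := by
    rw [← map_one E, ← map_sub, ← map_mul]
    exact AdjoinRoot.root_sq_of_X_sq_sub_C_mul_X _
  have hghost : ∀ n, WittVector.ghostComponent n (WittVector.teichmuller p (E (qq p k) + eps p α k)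
      - WittVector.teichmuller p (E (qq p k))) =
        eps p α k * E (qq p k ^ (p ^ n - 1) * qan (qq p k ^ p ^ α) (p ^ n)) := fun n => by
    rw [map_sub, WittVector.ghostComponent_teichmuller, WittVector.ghostComponent_teichmuller,
      add_pow_sub_pow_eq_mul_qan hε, map_mul, map_qan, map_pow, map_pow]
  refine ⟨_, hghost, fun c hc => ghostMap_injective_Rring p α k (funext fun n => ?_)⟩
  rw [WittVector.ghostMap_apply, WittVector.ghostMap_apply, hc, hghost]

/-- There exists a unique Witt vector `c ∈ 𝕎(R)` whose `n`-th ghost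
component is `ε·q^{p^n−1}·[p^n]_{q^{p^α}}` for every `n ≥ 0`. -/
theorem stmt5 (p : ℕ) [Fact p.Prime] (α : ℕ)
    (k : Type*) [Field k] [CharP k p] [PerfectRing k p] :
    ∃! c : WittVector p (Rring p α k), ∀ n : ℕ,
      WittVector.ghostComponent n c =
        eps p α k *
          algebraMap _ _ ((qq p k) ^ (p ^ n - 1) * qan ((qq p k) ^ p ^ α) (p ^ n)) :=
  stmt5_general p α k
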